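/- arXiv:1603.06797 — 5 statements merged into one kernel-verified Lean document; each statement's English description precedes it below -/
import Mathlib

section
/- Let f = Σ_{n≥1} ((−1)^{n+1}/n)·u^{−n}·tⁿ ∈ k((u))((t)). Then e·u·(u+t)·t^e·D(f) = t·(2u+q); in particular t^e·D(f) lies in the fraction field (inside k((u))((t))) of the canonical image of the iterated power series ring k[[u]][[t]]. -/
/-!
`f = log (1 + t/u)`, and the `tⁿ`-coefficient of `e tᵉ D f` is `(-1)ⁿ⁺¹ u⁻ⁿ⁻¹ (2u + q)` for
`n ≥ 1`: a geometric series in `-t/u`. Multiplying it by `u + t` telescopes to `t (2u + q) / u`.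
-/

open HahnSeries

namespace LaurentSeries

theorem C_add_single_one_mul_eq_single {R : Type*} [CommRing R] {a b : R} (hab : a * b = 1)
    (c : R) (x : LaurentSeries R) (hx_nonpos : ∀ n ≤ 0, x.coeff n = 0)
    (hx_pos : ∀ m : ℕ, x.coeff (m + 1) = (-1) ^ m * b ^ (m + 1) * c) :
    (C a + single 1 1) * x = single 1 c := by
  ext n
  rw [add_mul, coeff_add, C_mul_eq_smul, coeff_smul, coeff_single_mul, one_mul, smul_eq_mul]
  rcases le_or_gt n 0 with hn | hn
  · rw [hx_nonpos n hn, hx_nonpos (n - 1) (by omega), coeff_single_of_ne (by omega)]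
    simp
  obtain ⟨m, rfl⟩ := Int.eq_succ_of_zero_lt hn
  rcases m with _ | m
  · have hx_one : x.coeff 1 = b * c := by simpa using hx_pos 0
    simp [hx_one, hx_nonpos, ← mul_assoc, hab]
  · rw [hx_pos, show ((m + 1 : ℕ) : ℤ) + 1 - 1 = (m : ℤ) + 1 by omega, hx_pos,
      coeff_single_of_ne (by omega)]
    linear_combination (-1) ^ (m + 1) * b ^ (m + 1) * c * hab

theorem apply_single_of_coeff_eq_derivative {R : Type*} [Ring R]
    {du : LaurentSeries R → LaurentSeries R}
    (hdu : ∀ (g : LaurentSeries R) (m : ℤ), (du g).coeff m = (m + 1) • g.coeff (m + 1))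
    (a : ℤ) (c : R) : du (single a c) = single (a - 1) (a • c) := by
  ext m
  rw [hdu, coeff_single, coeff_single]
  by_cases h : m = a - 1
  · simp [h]
  · rw [if_neg (by omega), if_neg h, smul_zero]

noncomputable def ofPowerSeries₂ (R : Type*) [Semiring R] :
    PowerSeries (PowerSeries R) →+* LaurentSeries (LaurentSeries R) :=
  (ofPowerSeries ℤ (LaurentSeries R)).comp (PowerSeries.map (ofPowerSeries ℤ R))

variable {R : Type*} [Semiring R]

theorem coeff_ofPowerSeries₂_of_neg (x : PowerSeries (PowerSeries R)) {n : ℤ} (hn : n < 0) :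
    (ofPowerSeries₂ R x).coeff n = 0 := by
  simp [ofPowerSeries₂, PowerSeries.coeff_coe, hn]

theorem coeff_coeff_ofPowerSeries₂_of_neg (x : PowerSeries (PowerSeries R)) (n : ℤ) {m : ℤ}
    (hm : m < 0) : ((ofPowerSeries₂ R x).coeff n).coeff m = 0 := by
  rw [ofPowerSeries₂, RingHom.comp_apply, PowerSeries.coeff_coe]
  split_ifs
  · rfl
  · simp [PowerSeries.coeff_map, PowerSeries.coeff_coe, hm]

@[simp]
theorem ofPowerSeries₂_X : ofPowerSeries₂ R PowerSeries.X = single 1 1 := by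
  simp [ofPowerSeries₂]

@[simp]
theorem ofPowerSeries₂_C_X :
    ofPowerSeries₂ R (PowerSeries.C PowerSeries.X) = single 0 (single 1 1) := by
  simp [ofPowerSeries₂, C_apply]

@[simp]
theorem ofPowerSeries₂_C_C (r : R) :
    ofPowerSeries₂ R (PowerSeries.C (PowerSeries.C r)) = single 0 (single 0 r) := by
  simp [ofPowerSeries₂, C_apply]

end LaurentSeries

open LaurentSeries

section EulerOperator

variable {k : Type*} [Field k]

/-- `n g - (u + q) g'`: the `tⁿ`-coefficient of `e tᵉ D (g tⁿ)`. -/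
noncomputable def eulerCoeff (q : k) (du : LaurentSeries k → LaurentSeries k) (n : ℤ)
    (g : LaurentSeries k) : LaurentSeries k :=
  C (n : k) * g - (single 1 1 + C q) * du g

theorem C_mul_coeff_single_mul_eq_eulerCoeff {e : ℕ} (he : (e : k) ≠ 0) {q : k}
    {du : LaurentSeries k → LaurentSeries k}
    {D : LaurentSeries (LaurentSeries k) → LaurentSeries (LaurentSeries k)}
    (hD : ∀ (f : LaurentSeries (LaurentSeries k)) (m : ℤ),
      (D f).coeff m =
        HahnSeries.C (((m + (e : ℤ) : ℤ) : k) / (e : k)) * f.coeff (m + e)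
        - (HahnSeries.single (1 : ℤ) (1 : k) + HahnSeries.C q) / (e : LaurentSeries k)
            * du (f.coeff (m + e)))
    (f : LaurentSeries (LaurentSeries k)) (n : ℤ) :
    C (e : k) * (single (e : ℤ) 1 * D f).coeff n = eulerCoeff q du n (f.coeff n) := by
  have he' : (e : LaurentSeries k) = C (e : k) := (map_natCast C e).symm
  rw [coeff_single_mul, one_mul, hD, sub_add_cancel, mul_sub, ← mul_assoc, ← map_mul,
    mul_div_cancel₀ _ he, ← mul_assoc, he', mul_div_cancel₀ _ (C_ne_zero he), eulerCoeff]

variable {q : k} {du : LaurentSeries k → LaurentSeries k} {f : LaurentSeries (LaurentSeries k)}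

theorem eulerCoeff_log_coeff_of_nonpos
    (hdu : ∀ (g : LaurentSeries k) (m : ℤ), (du g).coeff m = (m + 1) • g.coeff (m + 1))
    (hf : ∀ n : ℤ, f.coeff n =
      if 1 ≤ n then HahnSeries.single (-n) ((-1 : k) ^ (n + 1) / (n : k)) else 0)
    {n : ℤ} (hn : n ≤ 0) :
    eulerCoeff q du n (f.coeff n) = 0 := by
  have hdu_zero : du 0 = 0 := by simpa using apply_single_of_coeff_eq_derivative hdu 0 0
  rw [eulerCoeff, hf, if_neg (by omega), hdu_zero, mul_zero, mul_zero, sub_zero]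

theorem eulerCoeff_log_coeff_succ [CharZero k]
    (hdu : ∀ (g : LaurentSeries k) (m : ℤ), (du g).coeff m = (m + 1) • g.coeff (m + 1))
    (hf : ∀ n : ℤ, f.coeff n =
      if 1 ≤ n then HahnSeries.single (-n) ((-1 : k) ^ (n + 1) / (n : k)) else 0)
    (m : ℕ) :
    eulerCoeff q du (m + 1) (f.coeff (m + 1)) =
      (-1) ^ m * single (-1) 1 ^ (m + 1) * (single (-1) 1 * (2 * single 1 1 + C q)) := by
  have hm : ((m + 1 : ℤ) : k) ≠ 0 := by exact_mod_cast Nat.succ_ne_zero m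
  have hsign : (-1 : k) ^ ((m : ℤ) + 1 + 1) = (-1) ^ m := by
    rw [show (m : ℤ) + 1 + 1 = ((m + 2 : ℕ) : ℤ) by push_cast; ring, zpow_natCast,
      _root_.pow_add]
    simp
  have hsmul : (-((m : ℤ) + 1)) • ((-1 : k) ^ m / ((m + 1 : ℤ) : k)) = -(-1) ^ m := by
    rw [neg_smul, zsmul_eq_mul, mul_div_cancel₀ _ hm]
  have hsign_series : ((-1) ^ m : LaurentSeries k) = single 0 ((-1) ^ m) := by
    rw [← C_apply, map_pow, map_neg, map_one]
  have htwo : (2 : LaurentSeries k) = single 0 2 := by rw [← C_apply, map_ofNat]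
  rw [eulerCoeff, hf, if_pos (by omega), hsign, apply_single_of_coeff_eq_derivative hdu, hsmul,
    C_apply, single_mul_single, zero_add, mul_div_cancel₀ _ hm]
  simp only [C_apply, single_pow, hsign_series, htwo, mul_add, add_mul, single_mul_single, one_pow,
    smul_neg, nsmul_eq_mul, mul_one]
  ext j
  simp only [coeff_add, coeff_sub, coeff_single]
  split_ifs <;> first | (exfalso; omega) | ring

theorem natCast_mul_single_mul_add_mul_eq_of_coeff_eq_eulerCoeff [CharZero k] {e : ℕ}
    (hdu : ∀ (g : LaurentSeries k) (m : ℤ), (du g).coeff m = (m + 1) • g.coeff (m + 1))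
    (hf : ∀ n : ℤ, f.coeff n =
      if 1 ≤ n then HahnSeries.single (-n) ((-1 : k) ^ (n + 1) / (n : k)) else 0)
    {x : LaurentSeries (LaurentSeries k)}
    (hx : ∀ n, C (e : k) * x.coeff n = eulerCoeff q du n (f.coeff n)) :
    (e : LaurentSeries (LaurentSeries k)) * single 0 (single 1 1) *
        (single 0 (single 1 1) + single 1 1) * x =
      single 1 1 * (2 * single 0 (single 1 1) + single 0 (single 0 q)) := by
  set p : LaurentSeries k := 2 * single 1 1 + C q
  have hgeom : (C (single 1 1) + single 1 1) * (C (C (e : k)) * x) =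
      single 1 (single (-1) 1 * p) := by
    refine C_add_single_one_mul_eq_single
      (by rw [single_mul_single, add_neg_cancel, mul_one, single_zero_one]) _ _
      (fun n hn => ?_) (fun m => ?_) <;>
    rw [C_mul_eq_smul, coeff_smul, smul_eq_mul, hx]
    exacts [eulerCoeff_log_coeff_of_nonpos hdu hf hn, eulerCoeff_log_coeff_succ hdu hf m]
  calc _ = C (single 1 1) * ((C (single 1 1) + single 1 1) * (C (C (e : k)) * x)) := by
        rw [← map_natCast C, ← map_natCast C, ← C_apply]; ring
    _ = single 1 p := by
        rw [hgeom, C_apply, single_mul_single, zero_add, ← mul_assoc, single_mul_single]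
        simp
    _ = _ := by
        rw [← C_apply, ← C_apply, ← C_apply, ← map_ofNat C 2, ← map_mul, ← map_add, C_apply,
          single_mul_single, add_zero, one_mul]

theorem natCast_mul_single_mul_add_ne_zero {e : ℕ} (he : (e : k) ≠ 0) :
    (e : LaurentSeries (LaurentSeries k)) * single 0 (single 1 1) *
      (single 0 (single 1 1) + single 1 1) ≠ 0 := by
  have hUT : (single 0 (single 1 1) + single 1 1 : LaurentSeries (LaurentSeries k)) ≠ 0 := by
    refine ne_zero_of_coeff_ne_zero (g := 0) ?_
    rw [coeff_add, coeff_single_same, coeff_single_of_ne zero_ne_one, add_zero]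
    exact single_ne_zero one_ne_zero
  rw [← map_natCast C, ← map_natCast C]
  exact mul_ne_zero (mul_ne_zero (C_ne_zero (C_ne_zero he))
    (single_ne_zero (single_ne_zero one_ne_zero))) hUT

end EulerOperator

/-- In `k((u))((t))` (iterated formal Laurent series over a field `k` of
characteristic zero), let `f = Σ_{n≥1} ((−1)^{n+1}/n)·u^{−n}·tⁿ` and let
`D(Σ_n f_n tⁿ) = Σ_n ((n/e)·f_n − ((u+q)/e)·f_n′)·t^{n−e}` (with `e ≥ 1`, `q ∈ k`, and
`f ↦ f′` the formal `u`-derivative).  Then `e·u·(u+t)·t^e·D(f) = t·(2u+q)`; in particular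
`t^e·D(f)` lies in the fraction field (inside `k((u))((t))`) of the canonical image of the
iterated power series ring `k[[u]][[t]]`. -/
theorem stmt_8 {k : Type*} [Field k] [CharZero k]
    (e : ℕ) (he : 1 ≤ e) (q : k)
    (du : LaurentSeries k → LaurentSeries k)
    (hdu : ∀ (g : LaurentSeries k) (m : ℤ), (du g).coeff m = (m + 1) • g.coeff (m + 1))
    (D : LaurentSeries (LaurentSeries k) → LaurentSeries (LaurentSeries k))
    (hD : ∀ (f : LaurentSeries (LaurentSeries k)) (m : ℤ),
      (D f).coeff m =
        HahnSeries.C (((m + (e : ℤ) : ℤ) : k) / (e : k)) * f.coeff (m + e)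
        - (HahnSeries.single (1 : ℤ) (1 : k) + HahnSeries.C q) / (e : LaurentSeries k)
            * du (f.coeff (m + e)))
    (f : LaurentSeries (LaurentSeries k))
    (hf : ∀ n : ℤ, f.coeff n =
      if 1 ≤ n then HahnSeries.single (-n) ((-1 : k) ^ (n + 1) / (n : k)) else 0) :
    (e : LaurentSeries (LaurentSeries k)) *
        HahnSeries.single (0 : ℤ) (HahnSeries.single (1 : ℤ) (1 : k)) *
        (HahnSeries.single (0 : ℤ) (HahnSeries.single (1 : ℤ) (1 : k)) +
          HahnSeries.single (1 : ℤ) (1 : LaurentSeries k)) *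
        HahnSeries.single (e : ℤ) (1 : LaurentSeries k) * D f =
      HahnSeries.single (1 : ℤ) (1 : LaurentSeries k) *
        (2 * HahnSeries.single (0 : ℤ) (HahnSeries.single (1 : ℤ) (1 : k)) +
          HahnSeries.single (0 : ℤ) (HahnSeries.single (0 : ℤ) q)) ∧
    ∃ g h : LaurentSeries (LaurentSeries k),
      ((∀ n : ℤ, n < 0 → g.coeff n = 0) ∧
        ∀ n : ℤ, ∀ m : ℤ, m < 0 → (g.coeff n).coeff m = 0) ∧
      ((∀ n : ℤ, n < 0 → h.coeff n = 0) ∧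
        ∀ n : ℤ, ∀ m : ℤ, m < 0 → (h.coeff n).coeff m = 0) ∧
      h ≠ 0 ∧
      HahnSeries.single (e : ℤ) (1 : LaurentSeries k) * D f = g / h := by
  have he' : (e : k) ≠ 0 := Nat.cast_ne_zero.mpr (by omega)
  have hident := natCast_mul_single_mul_add_mul_eq_of_coeff_eq_eulerCoeff hdu hf
    (C_mul_coeff_single_mul_eq_eulerCoeff he' hD f)
  rw [← mul_assoc] at hident
  let g : PowerSeries (PowerSeries k) :=
    PowerSeries.X * (2 * PowerSeries.C PowerSeries.X + PowerSeries.C (PowerSeries.C q))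
  let h : PowerSeries (PowerSeries k) :=
    (e : PowerSeries (PowerSeries k)) * PowerSeries.C PowerSeries.X *
      (PowerSeries.C PowerSeries.X + PowerSeries.X)
  have hh_ne : ofPowerSeries₂ k h ≠ 0 := by
    simpa [h] using natCast_mul_single_mul_add_ne_zero (e := e) he'
  refine ⟨hident, ofPowerSeries₂ k g, ofPowerSeries₂ k h,
    ⟨fun n hn => coeff_ofPowerSeries₂_of_neg g hn,
      fun n m hm => coeff_coeff_ofPowerSeries₂_of_neg g n hm⟩,
    ⟨fun n hn => coeff_ofPowerSeries₂_of_neg h hn,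
      fun n m hm => coeff_coeff_ofPowerSeries₂_of_neg h n hm⟩, hh_ne, ?_⟩
  rw [eq_div_iff hh_ne]
  simp only [g, h, map_mul, map_add, map_natCast, map_ofNat, ofPowerSeries₂_C_X, ofPowerSeries₂_X,
    ofPowerSeries₂_C_C]
  rw [← hident]
  ring
end

section
/- Let K be a field of characteristic zero, β_1,…,β_r ∈ K pairwise distinct and γ_1,…,γ_r ∈ K. If there exists h ∈ K(X) with dh/dX = Σ_{i=1}^r γ_i/(X − β_i), then γ_i = 0 for all i = 1,…,r. (Consequently, an element of K(X) has an antiderivative in K(X) only if its logarithmic part vanishes.) -/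
/-!
Write `h = p / q` in lowest terms. Since `d` obeys the Leibniz rule and extends `d/dX` on `K[X]`,
`d h · q² = q p' - q' p` is the Wronskian `W(q, p)`, and clearing the denominators of the
partial fractions turns the hypothesis into the polynomial identity
`W(q, p) · ∏ⱼ (X - βⱼ) = (∑ⱼ γⱼ ∏_{k ≠ j} (X - βₖ)) · q²`.
Fix `i`. If `q(βᵢ) ≠ 0`, evaluating at `βᵢ` gives `γᵢ = 0`. If `βᵢ` is a root of `q` of
multiplicity `m ≥ 1`, then `p(βᵢ) ≠ 0`, so in characteristic zero `W(q, p)` vanishes at `βᵢ`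
to order exactly `m - 1`: the left side vanishes to order `m`, the right side to order at
least `2m`, which is impossible.
-/

open Polynomial Lagrange Finset

section

variable {K : Type*} [Field K]

theorem isCoprime_X_sub_C_pow_of_not_isRoot {p : K[X]} {a : K} (hp : ¬ p.IsRoot a) (n : ℕ) :
    IsCoprime ((X - C a) ^ n) p :=
  ((irreducible_X_sub_C a).coprime_iff_not_dvd.2 (mt dvd_iff_isRoot.1 hp)).pow_left

theorem not_X_sub_C_pow_rootMultiplicity_dvd_wronskian [CharZero K] {p q : K[X]} {a : K}
    (hq : q ≠ 0) (hqa : q.IsRoot a) (hpa : ¬ p.IsRoot a) :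
    ¬ (X - C a) ^ rootMultiplicity a q ∣ wronskian q p := by
  intro hW
  have hq' : derivative q ≠ 0 :=
    derivative_ne_zero.2 (natDegree_pos_iff_degree_pos.2 (degree_pos_of_root hq hqa)).ne'
  have hdvd : (X - C a) ^ rootMultiplicity a q ∣ derivative q * p := by
    have := dvd_sub (dvd_mul_of_dvd_left (pow_rootMultiplicity_dvd q a) (derivative p)) hW
    rwa [wronskian, sub_sub_cancel] at this
  have hle := (le_rootMultiplicity_iff hq').2
    ((isCoprime_X_sub_C_pow_of_not_isRoot hpa _).dvd_of_dvd_mul_right hdvd)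
  rw [derivative_rootMultiplicity_of_root hqa] at hle
  have hpos := (rootMultiplicity_pos hq).2 hqa
  omega

theorem isRoot_of_wronskian_mul_eq [CharZero K] {p q N E : K[X]} {a : K} (hpq : IsCoprime p q)
    (hq : q ≠ 0) (hE : ¬ E.IsRoot a) (h : wronskian q p * ((X - C a) * E) = N * q ^ 2) :
    N.IsRoot a := by
  by_cases hqa : q.IsRoot a
  · exfalso
    set m := rootMultiplicity a q
    have hpa : ¬ p.IsRoot a := fun hpa => not_isUnit_X_sub_C a
      (hpq.isUnit_of_dvd' (dvd_iff_isRoot.2 hpa) (dvd_iff_isRoot.2 hqa))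
    have hm : 1 ≤ m := (rootMultiplicity_pos hq).2 hqa
    have hdvd : (X - C a) ^ (m + 1) ∣ wronskian q p * (X - C a) * E := by
      rw [mul_assoc, h]
      refine dvd_mul_of_dvd_right ((pow_dvd_pow _ (by omega : m + 1 ≤ m * 2)).trans ?_) N
      rw [pow_mul]
      exact pow_dvd_pow_of_dvd (pow_rootMultiplicity_dvd q a) 2
    have hW := (isCoprime_X_sub_C_pow_of_not_isRoot hE _).dvd_of_dvd_mul_right hdvd
    rw [pow_succ, mul_dvd_mul_iff_right (X_sub_C_ne_zero a)] at hW
    exact not_X_sub_C_pow_rootMultiplicity_dvd_wronskian hq hqa hpa hW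
  · have := congrArg (eval a) h
    simp only [eval_mul, eval_sub, eval_X, eval_C, sub_self, zero_mul, mul_zero, eval_pow] at this
    exact (mul_eq_zero.1 this.symm).resolve_right (pow_ne_zero 2 hqa)

theorem derivation_mul_denom_sq (d : RatFunc K → RatFunc K)
    (hmul : ∀ f g : RatFunc K, d (f * g) = f * d g + g * d f)
    (hpoly : ∀ p : K[X],
      d (algebraMap K[X] (RatFunc K) p) = algebraMap K[X] (RatFunc K) (derivative p))
    (f : RatFunc K) :
    d f * algebraMap K[X] (RatFunc K) (f.denom ^ 2) =
      algebraMap K[X] (RatFunc K) (wronskian f.denom f.num) := by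
  set A := algebraMap K[X] (RatFunc K)
  have hfq : f * A f.denom = A f.num := by
    nth_rw 1 [← f.num_div_denom]
    exact div_mul_cancel₀ _ <| (map_ne_zero_iff A (RatFunc.algebraMap_injective K)).2 f.denom_ne_zero
  have hleibniz := hmul f (A f.denom)
  rw [hfq, hpoly, hpoly] at hleibniz
  rw [wronskian, map_sub, map_mul, map_mul, map_pow, hleibniz, ← hfq]
  ring

theorem sum_div_X_sub_C_mul_nodal {ι : Type*} [DecidableEq ι] (s : Finset ι) (β γ : ι → K) :
    (∑ i ∈ s, RatFunc.C (γ i) / (RatFunc.X - RatFunc.C (β i))) *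
        algebraMap K[X] (RatFunc K) (nodal s β) =
      algebraMap K[X] (RatFunc K) (∑ i ∈ s, C (γ i) * nodal (s.erase i) β) := by
  rw [map_sum, sum_mul]
  refine sum_congr rfl fun i hi => ?_
  have hXβ : RatFunc.X - RatFunc.C (β i) = algebraMap K[X] (RatFunc K) (X - C (β i)) := by
    rw [map_sub, RatFunc.algebraMap_X, RatFunc.algebraMap_C]
  have hXβ0 : RatFunc.X - RatFunc.C (β i) ≠ 0 := by
    rw [hXβ, map_ne_zero_iff _ (RatFunc.algebraMap_injective K)]
    exact X_sub_C_ne_zero (β i)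
  rw [nodal_eq_mul_nodal_erase hi, map_mul, map_mul, ← hXβ, RatFunc.algebraMap_C]
  field_simp

theorem eval_sum_C_mul_nodal_erase {ι : Type*} [DecidableEq ι] {s : Finset ι} {β : ι → K}
    (γ : ι → K) {i : ι} (hi : i ∈ s) :
    eval (β i) (∑ j ∈ s, C (γ j) * nodal (s.erase j) β) =
      γ i * eval (β i) (nodal (s.erase i) β) := by
  rw [eval_finsetSum, sum_eq_single_of_mem i hi, eval_mul, eval_C]
  intro j _ hji
  rw [eval_mul, eval_nodal_at_node (mem_erase.2 ⟨hji.symm, hi⟩), mul_zero]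

end

theorem stmt_14_general {K : Type*} [Field K] [CharZero K]
    (d : RatFunc K → RatFunc K)
    (hmul : ∀ f g : RatFunc K, d (f * g) = f * d g + g * d f)
    (hpoly : ∀ p : Polynomial K,
      d (algebraMap (Polynomial K) (RatFunc K) p) =
        algebraMap (Polynomial K) (RatFunc K) (Polynomial.derivative p))
    (r : ℕ) (β γ : Fin r → K) (hβ : Function.Injective β)
    (h : RatFunc K)
    (hd : d h = ∑ i : Fin r, RatFunc.C (γ i) / (RatFunc.X - RatFunc.C (β i))) :
    ∀ i, γ i = 0 := by
  classical
  intro i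
  set N := ∑ j, C (γ j) * nodal (univ.erase j) β
  have key : wronskian h.denom h.num * nodal univ β = N * h.denom ^ 2 := by
    apply RatFunc.algebraMap_injective K
    rw [map_mul, map_mul, ← derivation_mul_denom_sq d hmul hpoly, ← sum_div_X_sub_C_mul_nodal,
      ← hd]
    ring
  rw [nodal_eq_mul_nodal_erase (mem_univ i)] at key
  have hE : ¬ (nodal (univ.erase i) β).IsRoot (β i) :=
    eval_nodal_not_at_node fun j hj => hβ.ne (ne_of_mem_erase hj).symm
  have hN := isRoot_of_wronskian_mul_eq h.isCoprime_num_denom h.denom_ne_zero hE key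
  rw [IsRoot, eval_sum_C_mul_nodal_erase γ (mem_univ i)] at hN
  exact (mul_eq_zero.1 hN).resolve_right hE

/-- Let `K` be a field of characteristic zero, `β_1, …, β_r ∈ K`
pairwise distinct and `γ_1, …, γ_r ∈ K`.  If there exists `h ∈ K(X)` with
`dh/dX = Σ_{i=1}^r γ_i/(X − β_i)` (where `d/dX` is the standard derivation of `K(X)`
extending the derivative of polynomials), then `γ_i = 0` for all `i`; i.e. an element of
`K(X)` has an antiderivative in `K(X)` only if its logarithmic part vanishes. -/
theorem stmt_14 {K : Type*} [Field K] [CharZero K]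
    (d : RatFunc K → RatFunc K)
    (hadd : ∀ f g : RatFunc K, d (f + g) = d f + d g)
    (hmul : ∀ f g : RatFunc K, d (f * g) = f * d g + g * d f)
    (hpoly : ∀ p : Polynomial K,
      d (algebraMap (Polynomial K) (RatFunc K) p) =
        algebraMap (Polynomial K) (RatFunc K) (Polynomial.derivative p))
    (r : ℕ) (β γ : Fin r → K) (hβ : Function.Injective β)
    (h : RatFunc K)
    (hd : d h = ∑ i : Fin r, RatFunc.C (γ i) / (RatFunc.X - RatFunc.C (β i))) :
    ∀ i, γ i = 0 :=
  stmt_14_general d hmul hpoly r β γ hβ h hd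
end

section
/- Let (K, δ) be a differential field of characteristic zero, and let δ̃ be the unique derivation on K(X) extending δ with δ̃(X) = 0. Suppose a ∈ K(X) is written a = dh/dX + Σ_{i=1}^r γ_i/(X − β_i) with h ∈ K(X), pairwise distinct β_1,…,β_r ∈ K and γ_1,…,γ_r ∈ K. Then there exists h̃ ∈ K(X) with δ̃(a) = dh̃/dX + Σ_{i=1}^r δ(γ_i)/(X − β_i); that is, the logarithmic part of δ̃(a) is Σ_{i=1}^r δ(γ_i)/(X − β_i). -/
/-!
The commutator `D ∘ d - d ∘ D` of two additive Leibniz maps of `K(X)` is again additive and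
Leibniz. It kills the constants (`d` sends them to `0`, `D` keeps them constant) and `X`
(`dX = 1`, `DX = 0`), hence vanishes on `K(X)`: so `D (d h) = d (D h)`. For a simple fraction the
quotient rule gives `D (γ / (X - β)) = δγ / (X - β) + γ δβ / (X - β)²`, and the last term is
`d (-γ δβ / (X - β))`. Summing, the residues of `D a` are the `δ γᵢ`.
-/

open Polynomial

def Derivation.ofLeibniz {L : Type*} [CommRing L] (F : L → L)
    (hadd : ∀ f g, F (f + g) = F f + F g) (hmul : ∀ f g, F (f * g) = f * F g + g * F f) :
    Derivation ℤ L L :=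
  Derivation.mk' (AddMonoidHom.mk' F hadd).toIntLinearMap hmul

section MapAdd

variable {G H : Type*} [AddCommGroup G] [AddCommGroup H] (F : G → H)

theorem map_zero_of_map_add (hadd : ∀ a b, F (a + b) = F a + F b) : F 0 = 0 :=
  (AddMonoidHom.mk' F hadd).map_zero

theorem map_sub_of_map_add (hadd : ∀ a b, F (a + b) = F a + F b) (a b : G) :
    F (a - b) = F a - F b :=
  (AddMonoidHom.mk' F hadd).map_sub a b

theorem map_sum_of_map_add (hadd : ∀ a b, F (a + b) = F a + F b) {ι : Type*} (s : Finset ι)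
    (f : ι → G) :
    F (∑ i ∈ s, f i) = ∑ i ∈ s, F (f i) :=
  map_sum (AddMonoidHom.mk' F hadd) f s

end MapAdd

theorem map_one_of_leibniz {L : Type*} [CommRing L] (F : L → L)
    (hadd : ∀ f g, F (f + g) = F f + F g) (hmul : ∀ f g, F (f * g) = f * F g + g * F f) :
    F 1 = 0 :=
  (Derivation.ofLeibniz F hadd hmul).map_one_eq_zero

theorem map_div_of_leibniz {L : Type*} [Field L] (F : L → L)
    (hadd : ∀ f g, F (f + g) = F f + F g) (hmul : ∀ f g, F (f * g) = f * F g + g * F f)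
    (a b : L) : F (a / b) = (b * F a - a * F b) / b ^ 2 := by
  rw [div_eq_inv_mul _ (b ^ 2), ← inv_pow]
  exact (Derivation.ofLeibniz F hadd hmul).leibniz_div a b

namespace RatFunc

variable {K : Type*} [Field K]

theorem X_sub_C_ne_zero (b : K) : (X - C b : RatFunc K) ≠ 0 := by
  simpa [algebraMap_X, algebraMap_C] using
    algebraMap_ne_zero (K := K) (Polynomial.X_sub_C_ne_zero b)

theorem eq_zero_of_leibniz_of_map_C_of_map_X (E : RatFunc K → RatFunc K)
    (hadd : ∀ f g, E (f + g) = E f + E g) (hmul : ∀ f g, E (f * g) = f * E g + g * E f)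
    (hC : ∀ c, E (C c) = 0) (hX : E X = 0) (f : RatFunc K) : E f = 0 := by
  have hpoly (p : K[X]) : E (algebraMap K[X] (RatFunc K) p) = 0 := by
    induction p using Polynomial.induction_on with
    | C c => simpa [algebraMap_C] using hC c
    | add p q hp hq => rw [map_add, hadd, hp, hq, add_zero]
    | monomial n c ih => rw [pow_succ, ← mul_assoc, map_mul, hmul, ih, algebraMap_X, hX]; simp
  induction f using RatFunc.induction_on with
  | f p q => simp [map_div_of_leibniz E hadd hmul, hpoly]

theorem comm_of_leibniz_of_map_C_of_map_X (δ : K → K) (D d : RatFunc K → RatFunc K)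
    (hDadd : ∀ f g, D (f + g) = D f + D g) (hDmul : ∀ f g, D (f * g) = f * D g + g * D f)
    (hdadd : ∀ f g, d (f + g) = d f + d g) (hdmul : ∀ f g, d (f * g) = f * d g + g * d f)
    (hDC : ∀ c, D (C c) = C (δ c)) (hDX : D X = 0) (hdC : ∀ c, d (C c) = 0) (hdX : d X = 1)
    (f : RatFunc K) : D (d f) = d (D f) := by
  have hD0 := map_zero_of_map_add D hDadd
  have hD1 := map_one_of_leibniz D hDadd hDmul
  have hd0 := map_zero_of_map_add d hdadd
  refine sub_eq_zero.mp <| eq_zero_of_leibniz_of_map_C_of_map_X (fun f => D (d f) - d (D f))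
    (fun f g => by simp only [hDadd, hdadd]; ring)
    (fun f g => by simp only [hDmul, hdmul, hDadd, hdadd]; ring)
    (fun c => by simp only [hdC, hDC, hD0, sub_zero])
    (by simp only [hdX, hDX, hD1, hd0, sub_zero]) f

theorem map_C_div_X_sub_C_add (δ : K → K) (D d : RatFunc K → RatFunc K)
    (hDadd : ∀ f g, D (f + g) = D f + D g) (hDmul : ∀ f g, D (f * g) = f * D g + g * D f)
    (hdadd : ∀ f g, d (f + g) = d f + d g) (hdmul : ∀ f g, d (f * g) = f * d g + g * d f)
    (hDC : ∀ c, D (C c) = C (δ c)) (hDX : D X = 0) (hdC : ∀ c, d (C c) = 0) (hdX : d X = 1)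
    (b c : K) :
    D (C c / (X - C b)) + d (C (c * δ b) / (X - C b)) = C (δ c) / (X - C b) := by
  have hDu : D (X - C b) = -C (δ b) := by
    rw [map_sub_of_map_add D hDadd]; simp [hDX, hDC]
  have hdu : d (X - C b) = 1 := by
    rw [map_sub_of_map_add d hdadd]; simp [hdX, hdC]
  rw [map_div_of_leibniz D hDadd hDmul, map_div_of_leibniz d hdadd hdmul, hDu, hdu, hDC, hdC,
    map_mul]
  field_simp [X_sub_C_ne_zero b]
  ring

end RatFunc

theorem stmt_16_general {K : Type*} [Field K]
    (δ : K → K)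
    (d : RatFunc K → RatFunc K)
    (hdadd : ∀ f g : RatFunc K, d (f + g) = d f + d g)
    (hdmul : ∀ f g : RatFunc K, d (f * g) = f * d g + g * d f)
    (hdpoly : ∀ p : Polynomial K,
      d (algebraMap (Polynomial K) (RatFunc K) p) =
        algebraMap (Polynomial K) (RatFunc K) (Polynomial.derivative p))
    (D : RatFunc K → RatFunc K)
    (hDadd : ∀ f g : RatFunc K, D (f + g) = D f + D g)
    (hDmul : ∀ f g : RatFunc K, D (f * g) = f * D g + g * D f)
    (hDC : ∀ c : K, D (RatFunc.C c) = RatFunc.C (δ c))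
    (hDX : D RatFunc.X = 0)
    (r : ℕ) (β γ : Fin r → K)
    (a h : RatFunc K)
    (ha : a = d h + ∑ i : Fin r, RatFunc.C (γ i) / (RatFunc.X - RatFunc.C (β i))) :
    ∃ htil : RatFunc K,
      D a = d htil + ∑ i : Fin r, RatFunc.C (δ (γ i)) / (RatFunc.X - RatFunc.C (β i)) := by
  have hdC (c : K) : d (RatFunc.C c) = 0 := by
    simpa [RatFunc.algebraMap_C] using hdpoly (Polynomial.C c)
  have hdX : d RatFunc.X = 1 := by simpa [RatFunc.algebraMap_X] using hdpoly Polynomial.X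
  have hterm := RatFunc.map_C_div_X_sub_C_add δ D d hDadd hDmul hdadd hdmul hDC hDX hdC hdX
  refine ⟨D h - ∑ i, RatFunc.C (γ i * δ (β i)) / (RatFunc.X - RatFunc.C (β i)), ?_⟩
  rw [ha, hDadd, map_sum_of_map_add D hDadd,
    RatFunc.comm_of_leibniz_of_map_C_of_map_X δ D d hDadd hDmul hdadd hdmul hDC hDX hdC hdX,
    map_sub_of_map_add d hdadd, map_sum_of_map_add d hdadd]
  simp only [← hterm, Finset.sum_add_distrib]
  ring

/-- Let `(K, δ)` be a differential field of characteristic zero, `d/dX`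
the standard derivation of `K(X)` extending the derivative of polynomials, and `δ̃` the
unique derivation of `K(X)` extending `δ` with `δ̃(X) = 0`.  If
`a = dh/dX + Σ_{i=1}^r γ_i/(X − β_i)` with `h ∈ K(X)`, pairwise distinct `β_i ∈ K` and
`γ_i ∈ K`, then there exists `h̃ ∈ K(X)` with
`δ̃(a) = dh̃/dX + Σ_{i=1}^r δ(γ_i)/(X − β_i)`; that is, the logarithmic part of `δ̃(a)`
is `Σ_{i=1}^r δ(γ_i)/(X − β_i)`. -/
theorem stmt_16 {K : Type*} [Field K] [CharZero K]
    (δ : K → K)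
    (hδadd : ∀ x y : K, δ (x + y) = δ x + δ y)
    (hδmul : ∀ x y : K, δ (x * y) = x * δ y + y * δ x)
    (d : RatFunc K → RatFunc K)
    (hdadd : ∀ f g : RatFunc K, d (f + g) = d f + d g)
    (hdmul : ∀ f g : RatFunc K, d (f * g) = f * d g + g * d f)
    (hdpoly : ∀ p : Polynomial K,
      d (algebraMap (Polynomial K) (RatFunc K) p) =
        algebraMap (Polynomial K) (RatFunc K) (Polynomial.derivative p))
    (D : RatFunc K → RatFunc K)
    (hDadd : ∀ f g : RatFunc K, D (f + g) = D f + D g)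
    (hDmul : ∀ f g : RatFunc K, D (f * g) = f * D g + g * D f)
    (hDC : ∀ c : K, D (RatFunc.C c) = RatFunc.C (δ c))
    (hDX : D RatFunc.X = 0)
    (r : ℕ) (β γ : Fin r → K) (hβ : Function.Injective β)
    (a h : RatFunc K)
    (ha : a = d h + ∑ i : Fin r, RatFunc.C (γ i) / (RatFunc.X - RatFunc.C (β i))) :
    ∃ htil : RatFunc K,
      D a = d htil + ∑ i : Fin r, RatFunc.C (δ (γ i)) / (RatFunc.X - RatFunc.C (β i)) :=
  stmt_16_general δ d hdadd hdmul hdpoly D hDadd hDmul hDC hDX r β γ a h ha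
end

section
/- Let (K, δ) be a differential field of characteristic zero and L(y) = Σ_{i=0}^n a_i δ^i(y) a linear differential operator with coefficients a_0,…,a_n ∈ K. Let b_1,…,b_m ∈ K satisfy L(b_i) = 0 for all i, and set a = Σ_{i=1}^m b_i·(x − i)^{−1} ∈ K[[x]], where (x − i)^{−1} denotes the inverse of x − i·1 in K[[x]]. Let y ∈ K[[x]] be the unique power series with constant coefficient 1 and y′ = a. Then L̃(y) = a_0 (a constant power series), where L̃(y) = Σ_{i=0}^n a_i δ̃^i(y) and δ̃ is the coefficientwise extension of δ to K[[x]]. -/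
/-!
Every coefficient of `y` beyond the constant one is a `ℚ`-linear combination of the `b i`:
`(X - C c)⁻¹` has coefficients `-c⁻¹ ^ (k + 1)`, rational when `c` is, and integrating divides
by positive integers. The operator `L` is additive, hence `ℚ`-linear, so it kills these
coefficients, while on the constant coefficient `1` it gives `a 0` because `δ 1 = 0`.
-/

open PowerSeries

theorem AddMonoidHom.eq_zero_of_mem_span_rat {M N : Type*} [AddCommGroup M] [AddCommGroup N]
    [Module ℚ M] [Module ℚ N] (f : M →+ N) {S : Set M} (hS : ∀ s ∈ S, f s = 0) {x : M}
    (hx : x ∈ Submodule.span ℚ S) : f x = 0 := by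
  induction hx using Submodule.span_induction with
  | mem s hs => exact hS s hs
  | zero => exact map_zero f
  | add x z _ _ hx hz => rw [map_add, hx, hz, add_zero]
  | smul q x _ hx => rw [map_rat_smul, hx, smul_zero]

namespace PowerSeries

variable {K : Type*} [Field K]

theorem inv_X_sub_C_eq_neg_invUnitsSub {c : K} (hc : c ≠ 0) :
    (X - C c)⁻¹ = -invUnitsSub (Units.mk0 c hc) := by
  rw [inv_eq_iff_mul_eq_one (by simp [hc]), neg_mul, ← mul_neg, neg_sub]
  exact invUnitsSub_mul_sub _

theorem coeff_inv_X_sub_C {c : K} (hc : c ≠ 0) (k : ℕ) :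
    coeff k (X - C c)⁻¹ = -c⁻¹ ^ (k + 1) := by
  simp [inv_X_sub_C_eq_neg_invUnitsSub hc, coeff_invUnitsSub, inv_pow]

variable [CharZero K]

theorem coeff_sum_C_mul_inv_X_sub_C_mem_span {ι : Type*} [Fintype ι] (b : ι → K) {c : ι → ℚ}
    (hc : ∀ i, c i ≠ 0) (k : ℕ) :
    coeff k (∑ i, C (b i) * (X - C (c i : K))⁻¹) ∈ Submodule.span ℚ (Set.range b) := by
  rw [map_sum]
  refine Submodule.sum_mem _ fun i _ => ?_
  have hcoeff : coeff k (C (b i) * (X - C (c i : K))⁻¹) = (-(c i)⁻¹ ^ (k + 1) : ℚ) • b i := by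
    rw [coeff_C_mul, coeff_inv_X_sub_C (Rat.cast_ne_zero.mpr (hc i)), Rat.smul_def]
    push_cast
    ring
  rw [hcoeff]
  exact Submodule.smul_mem _ _ (Submodule.subset_span ⟨i, rfl⟩)

theorem coeff_succ_mem_of_coeff_derivative_mem {p : Submodule ℚ K} {f : K⟦X⟧} {k : ℕ}
    (h : coeff k (d⁄dX K f) ∈ p) : coeff (k + 1) f ∈ p := by
  have hk : ((k : K) + 1) ≠ 0 := Nat.cast_add_one_ne_zero k
  have hcoeff : coeff (k + 1) f = ((k + 1 : ℚ)⁻¹) • coeff k (d⁄dX K f) := by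
    rw [coeff_derivative, Rat.smul_def]
    push_cast
    field_simp
  rw [hcoeff]
  exact p.smul_mem _ h

end PowerSeries

section LinearDifferentialOperator

variable {K : Type*} [Field K] {n : ℕ}

def linearDiffOp (D : AddMonoid.End K) (a : Fin (n + 1) → K) : K →+ K :=
  ∑ j : Fin (n + 1), (AddMonoidHom.mulLeft (a j)).comp (D ^ (j : ℕ))

theorem linearDiffOp_apply (D : AddMonoid.End K) (a : Fin (n + 1) → K) (x : K) :
    linearDiffOp D a x = ∑ j : Fin (n + 1), a j * D^[j] x := by
  rw [linearDiffOp, AddMonoidHom.finsetSum_apply]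
  rfl

theorem linearDiffOp_one {D : AddMonoid.End K} (hD : D 1 = 0) (a : Fin (n + 1) → K) :
    linearDiffOp D a 1 = a 0 := by
  have hiter : ∀ j : ℕ, D^[j + 1] 1 = 0 := fun j => by
    rw [Function.iterate_succ_apply, hD, iterate_map_zero]
  simp [linearDiffOp_apply, Fin.sum_univ_succ, hiter]

theorem coeff_sum_C_mul_iterate {δ : K → K} {dK : K⟦X⟧ → K⟦X⟧}
    (hdK : ∀ (f : K⟦X⟧) (m : ℕ), coeff m (dK f) = δ (coeff m f))
    (a : Fin (n + 1) → K) (f : K⟦X⟧) (k : ℕ) :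
    coeff k (∑ j : Fin (n + 1), C (a j) * dK^[j] f) =
      ∑ j : Fin (n + 1), a j * δ^[j] (coeff k f) := by
  simp only [map_sum, coeff_C_mul]
  refine Finset.sum_congr rfl fun j _ => ?_
  rw [(Function.Semiconj.iterate_right (fun g => hdK g k) j) f]

end LinearDifferentialOperator

/-- Let `(K, δ)` be a differential field of characteristic zero and
`L(y) = Σ_{i=0}^n a_i δ^i(y)` a linear differential operator over `K`.  Let
`b_1, …, b_m ∈ K` satisfy `L(b_i) = 0` and set `a = Σ_{i=1}^m b_i·(x − i)⁻¹ ∈ K[[x]]`.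
If `y ∈ K[[x]]` is the power series with constant coefficient `1` and `y′ = a`, then
`L̃(y) = a_0` (a constant power series), where `L̃(y) = Σ_{i=0}^n a_i δ̃^i(y)` and `δ̃` is
the coefficientwise extension of `δ` to `K[[x]]`. -/
theorem stmt_17 {K : Type*} [Field K] [CharZero K]
    (δ : K → K)
    (hδadd : ∀ x y : K, δ (x + y) = δ x + δ y)
    (hδmul : ∀ x y : K, δ (x * y) = x * δ y + y * δ x)
    (dK : PowerSeries K → PowerSeries K)
    (hdK : ∀ (f : PowerSeries K) (m : ℕ),
      PowerSeries.coeff m (dK f) = δ (PowerSeries.coeff m f))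
    (n : ℕ) (a : Fin (n + 1) → K)
    (m : ℕ) (b : Fin m → K)
    (hb : ∀ i : Fin m, (∑ j : Fin (n + 1), a j * δ^[(j : ℕ)] (b i)) = 0)
    (A : PowerSeries K)
    (hA : A = ∑ i : Fin m,
      PowerSeries.C (b i) * (PowerSeries.X - PowerSeries.C ((i : ℕ) + 1 : K))⁻¹)
    (y : PowerSeries K)
    (hy0 : PowerSeries.constantCoeff y = 1)
    (hy1 : PowerSeries.derivativeFun y = A) :
    (∑ j : Fin (n + 1), PowerSeries.C (a j) * dK^[(j : ℕ)] y) =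
      PowerSeries.C (a 0) := by
  let D : AddMonoid.End K := AddMonoidHom.mk' δ hδadd
  have hδ1 : δ 1 = 0 := by simpa using hδmul 1 1
  ext k
  rw [coeff_sum_C_mul_iterate hdK, show δ = D from rfl, ← linearDiffOp_apply, coeff_C]
  rcases k with _ | k
  · rw [coeff_zero_eq_constantCoeff_apply, hy0, linearDiffOp_one (D := D) hδ1, if_pos rfl]
  · have hA' : d⁄dX K y = ∑ i : Fin m, C (b i) * (X - C (((i : ℕ) + 1 : ℚ) : K))⁻¹ := by
      rw [show d⁄dX K y = A from hy1, hA]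
      push_cast
      rfl
    have hy : coeff (k + 1) y ∈ Submodule.span ℚ (Set.range b) := by
      refine coeff_succ_mem_of_coeff_derivative_mem ?_
      rw [hA']
      exact coeff_sum_C_mul_inv_X_sub_C_mem_span b (fun i => by positivity) k
    have hLb : ∀ s ∈ Set.range b, linearDiffOp D a s = 0 := by
      rintro _ ⟨i, rfl⟩
      exact (linearDiffOp_apply D a (b i)).trans (hb i)
    rw [if_neg k.succ_ne_zero]
    exact (linearDiffOp D a).eq_zero_of_mem_span_rat hLb hy
end

section
/- Let (K, δ) be a differential field of characteristic zero and L(y) = Σ_{i=0}^n a_i δ^i(y) a linear differential operator with coefficients a_0,…,a_n ∈ K. Let b_1,…,b_m ∈ K satisfy L(δ(b_i)) = 0 for all i, and set a = Σ_{i=1}^m b_i·(x − i)^{−1} ∈ K[[x]], where (x − i)^{−1} denotes the inverse of x − i·1 in K[[x]]. Let y ∈ K[[x]] be the unique power series with constant coefficient 1 and y′ = a·y (a unit of K[[x]]). Then L̃(δ̃(y)·y^{−1}) is a constant power series, i.e. L̃(δ̃(y)·y^{−1}) ∈ K, where L̃(f) = Σ_{i=0}^n a_i δ̃^i(f) and δ̃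 is the coefficientwise extension of δ to K[[x]]. -/
open PowerSeries

/-!
Write `u = δ̃(y) / y` and `L̃(f) = Σ_j a_j δ̃^j(f)`. Since `δ̃` commutes with `d/dx`, so do the
two logarithmic derivatives: `u′ = δ̃(y′ / y) = δ̃(a)`. Each `(x − i)⁻¹` is killed by `δ̃`, so
`δ̃^j(δ̃(a)) = Σ_i δ^j(δ(b_i)) (x − i)⁻¹` and therefore `L̃(u)′ = Σ_i L(δ(b_i)) (x − i)⁻¹ = 0`.
In characteristic zero a power series with vanishing derivative is constant.
-/

namespace Derivation

variable {R S A : Type*} [CommRing R] [CommRing S] [CommRing A] [Algebra R A]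
  [Algebra S A]

theorem map_logDeriv_comm (D₁ : Derivation R A A) (D₂ : Derivation S A A)
    (hcomm : ∀ a, D₁ (D₂ a) = D₂ (D₁ a)) {y z : A} (hzy : z * y = 1) :
    D₁ (D₂ y * z) = D₂ (D₁ y * z) := by
  rw [leibniz, leibniz, D₁.leibniz_of_mul_eq_one hzy, D₂.leibniz_of_mul_eq_one hzy, hcomm]
  simp only [smul_eq_mul]
  ring

end Derivation

namespace PowerSeries

theorem eq_C_of_derivative_eq_zero {R : Type*} [CommRing R] [IsAddTorsionFree R] {f : R⟦X⟧}
    (hf : d⁄dX R f = 0) : f = C (constantCoeff f) :=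
  derivative.ext (by rw [hf, derivative_C]) (constantCoeff_C _).symm

theorem derivation_leibniz_inv {S K : Type*} [CommRing S] [Field K] [Algebra S K]
    (D : Derivation S K⟦X⟧ K⟦X⟧) (f : K⟦X⟧) : D f⁻¹ = -f⁻¹ ^ 2 * D f := by
  by_cases hf : constantCoeff f = 0
  · simp [inv_eq_zero.mpr hf]
  · exact D.leibniz_of_mul_eq_one (PowerSeries.inv_mul_cancel f hf)

end PowerSeries

namespace Derivation

variable {S R : Type*} [CommSemiring S] [CommRing R] [Algebra S R] (δ : Derivation S R R)

noncomputable def powerSeriesMapCoeffs : Derivation S R⟦X⟧ R⟦X⟧ :=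
  mk'
    { toFun := fun f => PowerSeries.mk fun n => δ (coeff n f)
      map_add' := fun f g => by ext; simp
      map_smul' := fun s f => by ext; simp }
    fun f g => by
      rw [smul_eq_mul, smul_eq_mul, mul_comm g]
      ext n
      simp only [LinearMap.coe_mk, AddHom.coe_mk, map_add, coeff_mul, coeff_mk,
        map_sum, leibniz, smul_eq_mul, Finset.sum_add_distrib, mul_comm (coeff _ g)]

@[simp]
theorem coeff_powerSeriesMapCoeffs (f : R⟦X⟧) (n : ℕ) :
    coeff n (δ.powerSeriesMapCoeffs f) = δ (coeff n f) := by
  simp [powerSeriesMapCoeffs]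

@[simp]
theorem powerSeriesMapCoeffs_C (c : R) : δ.powerSeriesMapCoeffs (C c) = C (δ c) := by
  ext n
  rcases n with _ | n <;> simp [coeff_C]

@[simp]
theorem powerSeriesMapCoeffs_X : δ.powerSeriesMapCoeffs X = 0 := by
  ext n
  rcases n with _ | _ | n <;> simp [coeff_X]

theorem derivative_powerSeriesMapCoeffs (f : R⟦X⟧) :
    d⁄dX R (δ.powerSeriesMapCoeffs f) = δ.powerSeriesMapCoeffs (d⁄dX R f) := by
  ext n
  rw [coeff_derivative, coeff_powerSeriesMapCoeffs, coeff_powerSeriesMapCoeffs, coeff_derivative,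
    leibniz, ← Nat.cast_succ, map_natCast, smul_zero, zero_add, smul_eq_mul, mul_comm]

theorem iterate_powerSeriesMapCoeffs_sum_C_mul {ι : Type*} (s : Finset ι) (c : ι → R)
    {g : ι → R⟦X⟧} (hg : ∀ i ∈ s, δ.powerSeriesMapCoeffs (g i) = 0) (j : ℕ) :
    δ.powerSeriesMapCoeffs^[j] (∑ i ∈ s, C (c i) * g i) = ∑ i ∈ s, C (δ^[j] (c i)) * g i := by
  induction j with
  | zero => rfl
  | succ j ih =>
    rw [Function.iterate_succ_apply', ih, map_sum]
    refine Finset.sum_congr rfl fun i hi => ?_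
    rw [leibniz, hg i hi, smul_zero, zero_add, powerSeriesMapCoeffs_C, smul_eq_mul, mul_comm,
      Function.iterate_succ_apply']

theorem derivative_sum_C_mul_iterate_powerSeriesMapCoeffs {n : ℕ} (a : Fin (n + 1) → R)
    (u : R⟦X⟧) :
    d⁄dX R (∑ j : Fin (n + 1), C (a j) * δ.powerSeriesMapCoeffs^[j] u) =
      ∑ j : Fin (n + 1), C (a j) * δ.powerSeriesMapCoeffs^[j] (d⁄dX R u) := by
  have hcomm : Function.Commute (d⁄dX R) δ.powerSeriesMapCoeffs :=
    δ.derivative_powerSeriesMapCoeffs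
  simp only [map_sum, leibniz, derivative_C, smul_eq_mul, mul_zero, add_zero,
    (hcomm.iterate_right _).eq]

theorem sum_C_mul_iterate_powerSeriesMapCoeffs_sum_C_mul {n : ℕ} (a : Fin (n + 1) → R)
    {ι : Type*} (s : Finset ι) (c : ι → R) {g : ι → R⟦X⟧}
    (hg : ∀ i ∈ s, δ.powerSeriesMapCoeffs (g i) = 0) :
    ∑ j : Fin (n + 1), C (a j) * δ.powerSeriesMapCoeffs^[j] (∑ i ∈ s, C (c i) * g i) =
      ∑ i ∈ s, C (∑ j : Fin (n + 1), a j * δ^[j] (c i)) * g i := by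
  simp only [δ.iterate_powerSeriesMapCoeffs_sum_C_mul s c hg, Finset.mul_sum, map_sum, map_mul,
    Finset.sum_mul, mul_assoc]
  exact Finset.sum_comm

end Derivation

theorem stmt_18_general {K : Type*} [Field K] [CharZero K]
    (δ : K → K)
    (hδadd : ∀ x y : K, δ (x + y) = δ x + δ y)
    (hδmul : ∀ x y : K, δ (x * y) = x * δ y + y * δ x)
    (dK : PowerSeries K → PowerSeries K)
    (hdK : ∀ (f : PowerSeries K) (m : ℕ),
      PowerSeries.coeff m (dK f) = δ (PowerSeries.coeff m f))
    (n : ℕ) (a : Fin (n + 1) → K)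
    (m : ℕ) (b : Fin m → K)
    (hb : ∀ i : Fin m, (∑ j : Fin (n + 1), a j * δ^[(j : ℕ)] (δ (b i))) = 0)
    (A : PowerSeries K)
    (hA : A = ∑ i : Fin m,
      PowerSeries.C (b i) * (PowerSeries.X - PowerSeries.C ((i : ℕ) + 1 : K))⁻¹)
    (y : PowerSeries K)
    (hy0 : PowerSeries.constantCoeff y = 1)
    (hy1 : PowerSeries.derivativeFun y = A * y) :
    ∃ c : K,
      (∑ j : Fin (n + 1), PowerSeries.C (a j) * dK^[(j : ℕ)] (dK y * y⁻¹)) =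
        PowerSeries.C c := by
  let δ' : Derivation ℤ K K := .mk' (AddMonoidHom.mk' δ hδadd).toIntLinearMap hδmul
  obtain rfl : dK = δ'.powerSeriesMapCoeffs := funext fun f =>
    ext fun k => by rw [hdK, Derivation.coeff_powerSeriesMapCoeffs]; rfl
  set D := δ'.powerSeriesMapCoeffs
  have hpole : ∀ i : Fin m, i ∈ Finset.univ → D (X - C ((i : ℕ) + 1 : K))⁻¹ = 0 := fun i _ => by
    simp [derivation_leibniz_inv, D, δ']
  have hy : constantCoeff y ≠ 0 := by simp [hy0]
  have hlog : d⁄dX K (D y * y⁻¹) = D A := by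
    rw [(d⁄dX K).map_logDeriv_comm D δ'.derivative_powerSeriesMapCoeffs
      (PowerSeries.inv_mul_cancel y hy), show d⁄dX K y = A * y from hy1, mul_assoc,
      PowerSeries.mul_inv_cancel y hy, mul_one]
  have hDA : D A = ∑ i, C (δ' (b i)) * (X - C ((i : ℕ) + 1 : K))⁻¹ := by
    rw [hA]
    exact δ'.iterate_powerSeriesMapCoeffs_sum_C_mul _ _ hpole 1
  refine ⟨_, eq_C_of_derivative_eq_zero ?_⟩
  rw [δ'.derivative_sum_C_mul_iterate_powerSeriesMapCoeffs, hlog, hDA,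
    δ'.sum_C_mul_iterate_powerSeriesMapCoeffs_sum_C_mul _ _ _ hpole]
  exact Finset.sum_eq_zero fun i _ => by
    rw [show ∑ j, a j * δ'^[j] (δ' (b i)) = 0 from hb i, map_zero, zero_mul]

/-- Let `(K, δ)` be a differential field of characteristic zero and
`L(y) = Σ_{i=0}^n a_i δ^i(y)` a linear differential operator over `K`.  Let
`b_1, …, b_m ∈ K` satisfy `L(δ(b_i)) = 0` and set `a = Σ_{i=1}^m b_i·(x − i)⁻¹ ∈ K[[x]]`.
If `y ∈ K[[x]]` is the power series with constant coefficient `1` and `y′ = a·y`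
(a unit of `K[[x]]`), then `L̃(δ̃(y)·y⁻¹)` is a constant power series, i.e.
`L̃(δ̃(y)·y⁻¹) ∈ K`, where `L̃(f) = Σ_{i=0}^n a_i δ̃^i(f)` and `δ̃` is the coefficientwise
extension of `δ` to `K[[x]]`. -/
theorem stmt_18 {K : Type*} [Field K] [CharZero K]
    (δ : K → K)
    (hδadd : ∀ x y : K, δ (x + y) = δ x + δ y)
    (hδmul : ∀ x y : K, δ (x * y) = x * δ y + y * δ x)
    (dK : PowerSeries K → PowerSeries K)
    (hdK : ∀ (f : PowerSeries K) (m : ℕ),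
      PowerSeries.coeff m (dK f) = δ (PowerSeries.coeff m f))
    (n : ℕ) (a : Fin (n + 1) → K)
    (m : ℕ) (b : Fin m → K)
    (hb : ∀ i : Fin m, (∑ j : Fin (n + 1), a j * δ^[(j : ℕ)] (δ (b i))) = 0)
    (A : PowerSeries K)
    (hA : A = ∑ i : Fin m,
      PowerSeries.C (b i) * (PowerSeries.X - PowerSeries.C ((i : ℕ) + 1 : K))⁻¹)
    (y : PowerSeries K)
    (hy0 : PowerSeries.constantCoeff y = 1)
    (hy1 : PowerSeries.derivativeFun y = A * y)
    (hyu : IsUnit y) :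
    ∃ c : K,
      (∑ j : Fin (n + 1), PowerSeries.C (a j) * dK^[(j : ℕ)] (dK y * y⁻¹)) =
        PowerSeries.C c :=
  stmt_18_general δ hδadd hδmul dK hdK n a m b hb A hA y hy0 hy1
end
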